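/- arXiv:1903.01666 — 3 statements merged into one kernel-verified Lean document; each statement's English description precedes it below -/
import Mathlib

section
/- Let M and M̂ be two discounted MDPs with the same state space S, action space A, running cost g with values in [0, C_max], and discount factor γ ∈ (0,1), differing only in their transition kernels T and T̂. If for every state s and action a the total variation (L1) distance ‖T̂(·|s,a) − T(·|s,a)‖₁ ≤ ε, then for any stationary policy φ, the value functions satisfy sup_{s∈S} |V_M̂^φ(s) − V_M^φ(s)| ≤ γ C_max ε / (2(1−γ)²). -/
/-- Simulation lemma: two discounted MDPs differing only in transition kernels
with pointwise L1 distance at most ε have value functions (for any fixed policy φ)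
differing by at most γ C_max ε / (2(1-γ)²) in sup norm. -/
theorem stmt_0
    {S A : Type*} [Fintype S]
    (g : S → A → ℝ) (Cmax : ℝ) (hg : ∀ s a, 0 ≤ g s a ∧ g s a ≤ Cmax)
    (γ : ℝ) (hγ : 0 < γ ∧ γ < 1)
    (T That : S → A → S → ℝ)
    (hT : ∀ s a, (∀ s', 0 ≤ T s a s') ∧ ∑ s', T s a s' = 1)
    (hThat : ∀ s a, (∀ s', 0 ≤ That s a s') ∧ ∑ s', That s a s' = 1)
    (ε : ℝ) (hε : ∀ s a, ∑ s', |That s a s' - T s a s'| ≤ ε)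
    (φ : S → A) (V Vhat : S → ℝ)
    (hBellV : ∀ s, V s = g s (φ s) + γ * ∑ s', T s (φ s) s' * V s')
    (hBellVhat : ∀ s, Vhat s = g s (φ s) + γ * ∑ s', That s (φ s) s' * Vhat s')
    (hVrange : ∀ s, 0 ≤ V s ∧ V s ≤ Cmax / (1 - γ))
    (hVhatrange : ∀ s, 0 ≤ Vhat s ∧ Vhat s ≤ Cmax / (1 - γ)) :
    ∀ s, |Vhat s - V s| ≤ γ * Cmax * ε / (2 * (1 - γ) ^ 2) := by
  intro s
  have hγ0 := hγ.1
  have h1γ : 0 < 1 - γ := by linarith [hγ.2]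
  have hC : 0 ≤ Cmax := le_trans (hg s (φ s)).1 (hg s (φ s)).2
  have hε0 : 0 ≤ ε :=
    le_trans (Finset.sum_nonneg fun s' _ => abs_nonneg _) (hε s (φ s))
  obtain ⟨s₀, -, hs₀⟩ := Finset.exists_max_image (Finset.univ : Finset S)
    (fun u => |Vhat u - V u|) ⟨s, Finset.mem_univ s⟩
  set D := |Vhat s₀ - V s₀| with hD
  set c := Cmax / (2 * (1 - γ)) with hc
  have hc0 : 0 ≤ c := by positivity
  have h2c : Cmax / (1 - γ) = 2 * c := by
    rw [hc]; field_simp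
  have e1 : Vhat s₀ - V s₀ =
      γ * ((∑ s', (That s₀ (φ s₀) s' - T s₀ (φ s₀) s') * (Vhat s' - c)) +
        ∑ s', T s₀ (φ s₀) s' * (Vhat s' - V s')) := by
    have hT1 := (hT s₀ (φ s₀)).2
    have hThat1 := (hThat s₀ (φ s₀)).2
    rw [hBellVhat s₀, hBellV s₀]
    simp only [sub_mul, mul_sub, Finset.sum_sub_distrib]
    rw [← Finset.sum_mul, ← Finset.sum_mul, hT1, hThat1]
    ring
  have b1 : |∑ s', (That s₀ (φ s₀) s' - T s₀ (φ s₀) s') * (Vhat s' - c)| ≤ ε * c := by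
    calc |∑ s', (That s₀ (φ s₀) s' - T s₀ (φ s₀) s') * (Vhat s' - c)|
        ≤ ∑ s', |(That s₀ (φ s₀) s' - T s₀ (φ s₀) s') * (Vhat s' - c)| :=
          Finset.abs_sum_le_sum_abs _ _
      _ ≤ ∑ s', |That s₀ (φ s₀) s' - T s₀ (φ s₀) s'| * c := by
          refine Finset.sum_le_sum fun s' _ => ?_
          rw [abs_mul]
          refine mul_le_mul_of_nonneg_left ?_ (abs_nonneg _)
          have hv := hVhatrange s'
          rw [h2c] at hv
          exact abs_le.mpr ⟨by linarith [hv.1], by linarith [hv.2]⟩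
      _ = (∑ s', |That s₀ (φ s₀) s' - T s₀ (φ s₀) s'|) * c := by
          rw [Finset.sum_mul]
      _ ≤ ε * c := mul_le_mul_of_nonneg_right (hε s₀ (φ s₀)) hc0
  have b2 : |∑ s', T s₀ (φ s₀) s' * (Vhat s' - V s')| ≤ D := by
    calc |∑ s', T s₀ (φ s₀) s' * (Vhat s' - V s')|
        ≤ ∑ s', |T s₀ (φ s₀) s' * (Vhat s' - V s')| := Finset.abs_sum_le_sum_abs _ _
      _ ≤ ∑ s', T s₀ (φ s₀) s' * D := by
          refine Finset.sum_le_sum fun s' _ => ?_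
          rw [abs_mul, abs_of_nonneg ((hT s₀ (φ s₀)).1 s')]
          exact mul_le_mul_of_nonneg_left (hs₀ s' (Finset.mem_univ s'))
            ((hT s₀ (φ s₀)).1 s')
      _ = D := by rw [← Finset.sum_mul, (hT s₀ (φ s₀)).2, one_mul]
  have key : D ≤ γ * (ε * c + D) := by
    calc D = |γ * ((∑ s', (That s₀ (φ s₀) s' - T s₀ (φ s₀) s') * (Vhat s' - c)) +
          ∑ s', T s₀ (φ s₀) s' * (Vhat s' - V s'))| := by rw [hD, e1]
      _ = γ * |(∑ s', (That s₀ (φ s₀) s' - T s₀ (φ s₀) s') * (Vhat s' - c)) +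
          ∑ s', T s₀ (φ s₀) s' * (Vhat s' - V s')| := by
          rw [abs_mul, abs_of_pos hγ0]
      _ ≤ γ * (ε * c + D) :=
          mul_le_mul_of_nonneg_left (le_trans (abs_add_le _ _) (add_le_add b1 b2))
            (le_of_lt hγ0)
  have hce : c * (2 * (1 - γ)) = Cmax := by
    rw [hc]; field_simp
  have hDbound : D ≤ γ * Cmax * ε / (2 * (1 - γ) ^ 2) := by
    rw [le_div_iff₀ (by positivity)]
    have k2 : D * (1 - γ) ≤ γ * (ε * c) := by nlinarith [key]
    have k3 : D * (1 - γ) * (2 * (1 - γ)) ≤ γ * (ε * c) * (2 * (1 - γ)) :=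
      mul_le_mul_of_nonneg_right k2 (by linarith)
    have k4 : γ * (ε * c) * (2 * (1 - γ)) = γ * Cmax * ε := by rw [← hce]; ring
    nlinarith [k3, k4]
  exact le_trans (hs₀ s (Finset.mem_univ s)) hDbound
end

section
/- Under the hypotheses of the simulation lemma (two MDPs M, M̂ differing only in transition kernels with pointwise L1 distance at most ε, costs in [0,C_max], discount γ), if φ*_M is an optimal policy for M and φ*_M̂ is an optimal policy for M̂, then the suboptimality of using φ*_M̂ on M is bounded: sup_{s∈S} (V_M^{φ*_M̂}(s) − V_M^{φ*_M}(s)) ≤ γ C_max ε / (1−γ)². -/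
/-- Optimality gap: using the optimal policy of a surrogate MDP M̂ (whose transition
kernel is within ε in L1 of the true one) on the true MDP M is at most
γ C_max ε / (1-γ)² suboptimal. -/
theorem stmt_1
    {S A : Type*} [Fintype S]
    (g : S → A → ℝ) (Cmax : ℝ) (hg : ∀ s a, 0 ≤ g s a ∧ g s a ≤ Cmax)
    (γ : ℝ) (hγ : 0 < γ ∧ γ < 1)
    (T That : S → A → S → ℝ)
    (hT : ∀ s a, (∀ s', 0 ≤ T s a s') ∧ ∑ s', T s a s' = 1)
    (hThat : ∀ s a, (∀ s', 0 ≤ That s a s') ∧ ∑ s', That s a s' = 1)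
    (ε : ℝ) (hε : ∀ s a, ∑ s', |That s a s' - T s a s'| ≤ ε)
    -- value functions of every stationary policy on M and on M̂
    (V Vhat : (S → A) → S → ℝ)
    (hBellV : ∀ φ s, V φ s = g s (φ s) + γ * ∑ s', T s (φ s) s' * V φ s')
    (hBellVhat : ∀ φ s, Vhat φ s = g s (φ s) + γ * ∑ s', That s (φ s) s' * Vhat φ s')
    (hVrange : ∀ φ s, 0 ≤ V φ s ∧ V φ s ≤ Cmax / (1 - γ))
    (hVhatrange : ∀ φ s, 0 ≤ Vhat φ s ∧ Vhat φ s ≤ Cmax / (1 - γ))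
    -- optimal policies on M and on M̂
    (φM φMhat : S → A)
    (hoptM : ∀ φ s, V φM s ≤ V φ s)
    (hoptMhat : ∀ φ s, Vhat φMhat s ≤ Vhat φ s) :
    ∀ s, V φMhat s - V φM s ≤ γ * Cmax * ε / (1 - γ) ^ 2 := by
  intro s0
  haveI : Nonempty S := ⟨s0⟩
  obtain ⟨hγ0, hγ1⟩ := hγ
  have h1γ : (0:ℝ) < 1 - γ := by linarith
  have hC : 0 ≤ Cmax := le_trans (hg s0 (φM s0)).1 (hg s0 (φM s0)).2
  have hε0 : 0 ≤ ε :=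
    le_trans (Finset.sum_nonneg fun _ _ => abs_nonneg _) (hε s0 (φM s0))
  set c := Cmax / (2 * (1 - γ)) with hc
  have hc0 : 0 ≤ c := by positivity
  have h2c : 2 * c = Cmax / (1 - γ) := by rw [hc]; field_simp
  -- simulation lemma
  have sim : ∀ φ t, |V φ t - Vhat φ t| ≤ γ * ε * c / (1 - γ) := by
    intro φ t
    set D := Finset.univ.sup' Finset.univ_nonempty (fun u => |V φ u - Vhat φ u|) with hD
    have hDmem : ∀ u, |V φ u - Vhat φ u| ≤ D :=
      fun u => Finset.le_sup' (fun u => |V φ u - Vhat φ u|) (Finset.mem_univ u)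
    have key : ∀ u, |V φ u - Vhat φ u| ≤ γ * (ε * c) + γ * D := by
      intro u
      have hsum : ∑ s', (T u (φ u) s' - That u (φ u) s') * c = 0 := by
        rw [← Finset.sum_mul, Finset.sum_sub_distrib, (hT u (φ u)).2, (hThat u (φ u)).2]
        ring
      have expand :
          (∑ s', T u (φ u) s' * (V φ s' - Vhat φ s'))
            + (∑ s', (T u (φ u) s' - That u (φ u) s') * (Vhat φ s' - c))
          = (∑ s', T u (φ u) s' * V φ s') - (∑ s', That u (φ u) s' * Vhat φ s')
            - (∑ s', (T u (φ u) s' - That u (φ u) s') * c) := by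
        rw [← Finset.sum_add_distrib, ← Finset.sum_sub_distrib, ← Finset.sum_sub_distrib]
        exact Finset.sum_congr rfl fun x _ => by ring
      have hdiff : V φ u - Vhat φ u
          = γ * ((∑ s', T u (φ u) s' * (V φ s' - Vhat φ s'))
            + (∑ s', (T u (φ u) s' - That u (φ u) s') * (Vhat φ s' - c))) := by
        rw [hBellV φ u, hBellVhat φ u, expand, hsum]
        ring
      have b1 : |∑ s', T u (φ u) s' * (V φ s' - Vhat φ s')| ≤ D := by
        calc |∑ s', T u (φ u) s' * (V φ s' - Vhat φ s')|
            ≤ ∑ s', |T u (φ u) s' * (V φ s' - Vhat φ s')| := Finset.abs_sum_le_sum_abs _ _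
          _ ≤ ∑ s', T u (φ u) s' * D := by
              apply Finset.sum_le_sum; intro x _
              rw [abs_mul, abs_of_nonneg ((hT u (φ u)).1 x)]
              exact mul_le_mul_of_nonneg_left (hDmem x) ((hT u (φ u)).1 x)
          _ = D := by rw [← Finset.sum_mul, (hT u (φ u)).2, one_mul]
      have b2 : |∑ s', (T u (φ u) s' - That u (φ u) s') * (Vhat φ s' - c)| ≤ ε * c := by
        calc |∑ s', (T u (φ u) s' - That u (φ u) s') * (Vhat φ s' - c)|
            ≤ ∑ s', |(T u (φ u) s' - That u (φ u) s') * (Vhat φ s' - c)| :=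
              Finset.abs_sum_le_sum_abs _ _
          _ ≤ ∑ s', |That u (φ u) s' - T u (φ u) s'| * c := by
              apply Finset.sum_le_sum; intro x _
              rw [abs_mul, abs_sub_comm]
              refine mul_le_mul_of_nonneg_left ?_ (abs_nonneg _)
              have h1 := (hVhatrange φ x).1
              have h2 := (hVhatrange φ x).2
              rw [← h2c] at h2
              exact abs_le.2 ⟨by linarith, by linarith⟩
          _ = (∑ s', |That u (φ u) s' - T u (φ u) s'|) * c := by rw [Finset.sum_mul]
          _ ≤ ε * c := mul_le_mul_of_nonneg_right (hε u (φ u)) hc0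
      calc |V φ u - Vhat φ u|
          = γ * |(∑ s', T u (φ u) s' * (V φ s' - Vhat φ s'))
            + (∑ s', (T u (φ u) s' - That u (φ u) s') * (Vhat φ s' - c))| := by
            rw [hdiff, abs_mul, abs_of_pos hγ0]
        _ ≤ γ * (|∑ s', T u (φ u) s' * (V φ s' - Vhat φ s')|
            + |∑ s', (T u (φ u) s' - That u (φ u) s') * (Vhat φ s' - c)|) := by
            exact mul_le_mul_of_nonneg_left (abs_add_le _ _) (le_of_lt hγ0)
        _ ≤ γ * (ε * c) + γ * D := by nlinarith
    have hDle : D ≤ γ * ε * c / (1 - γ) := by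
      obtain ⟨u, _, hu⟩ := Finset.exists_mem_eq_sup' Finset.univ_nonempty
        (fun u => |V φ u - Vhat φ u|)
      rw [le_div_iff₀ h1γ]
      have := key u
      rw [← hu] at this
      nlinarith
    exact le_trans (hDmem t) hDle
  have h1 := abs_le.1 (sim φMhat s0)
  have h2 := abs_le.1 (sim φM s0)
  have h3 := hoptMhat φM s0
  have heq : γ * ε * c / (1 - γ) * 2 = γ * Cmax * ε / (1 - γ) ^ 2 := by
    rw [hc]; field_simp
  linarith [h1.1, h1.2, h2.1, h2.2]
end

section
/- Let P be a multinomial (categorical) distribution on N outcomes and let P̂ be the empirical distribution of n i.i.d. samples from P, i.e., P̂(i) = (1/n) Σ_{j=1}^n 1{x_j = i}. Then with probability at least 1 − δ, ‖P̂ − P‖₁ ≤ 2 √((1/(2n)) ln(2^{N+1}/δ)). -/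
/-!
Write `v = P̂ - P`. For the sign vector `u` of `v` we have `‖v‖₁ = ∑ᵢ uᵢ vᵢ`, and
`∑ᵢ uᵢ vᵢ = (1/n) ∑ⱼ (u(Xⱼ) - E[u(Xⱼ)])` is a centred average of `n` independent variables
with values in `[-1, 1]`. Hoeffding's inequality bounds each of the `2^N` deviation events by
`δ / 2^(N+1)`, and a union bound over the sign vectors leaves probability at most `δ / 2`.
-/

open MeasureTheory ProbabilityTheory Real

section Concentration

variable {Ω ι : Type*} [MeasurableSpace Ω] {μ : Measure Ω}

theorem measureReal_sum_sub_integral_ge_le [IsProbabilityMeasure μ] [Fintype ι]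
    {Y : ι → Ω → ℝ} (hY : ∀ j, Measurable (Y j)) (hindep : iIndepFun Y μ) {a b : ℝ}
    (hab : ∀ j ω, Y j ω ∈ Set.Icc a b) {ε : ℝ} (hε : 0 ≤ ε) :
    μ.real {ω | ε ≤ ∑ j, (Y j ω - μ[Y j])} ≤
      exp (-ε ^ 2 / (2 * Fintype.card ι * ((b - a) / 2) ^ 2)) := by
  have hcentred : iIndepFun (fun j ω => Y j ω - μ[Y j]) μ :=
    hindep.comp (fun j x => x - ∫ ω, Y j ω ∂μ) fun _ => measurable_id.sub_const _
  have hsubG : ∀ j ∈ Finset.univ,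
      HasSubgaussianMGF (fun ω => Y j ω - μ[Y j]) ((‖b - a‖₊ / 2) ^ 2) μ :=
    fun j _ => hasSubgaussianMGF_of_mem_Icc (hY j).aemeasurable (ae_of_all _ (hab j))
  refine (HasSubgaussianMGF.measure_sum_ge_le_of_iIndepFun hcentred hsubG hε).trans_eq ?_
  simp [mul_assoc, div_pow]

theorem integral_comp_eq_sum_mul [IsFiniteMeasure μ] {α : Type*} [Fintype α]
    [MeasurableSpace α] [MeasurableSingletonClass α] {X : Ω → α} (hX : Measurable X)
    {P : α → ℝ} (hP : ∀ i, 0 ≤ P i) (hdist : ∀ i, μ (X ⁻¹' {i}) = ENNReal.ofReal (P i))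
    (f : α → ℝ) :
    ∫ ω, f (X ω) ∂μ = ∑ i, f i * P i := by
  rw [← integral_map hX.aemeasurable (measurable_of_finite f).aestronglyMeasurable,
    integral_fintype (.of_finite)]
  simp [measureReal_def, Measure.map_apply hX (measurableSet_singleton _), hdist, hP, mul_comm]

theorem ofReal_one_sub_le_measure_of_compl_subset_iUnion [IsProbabilityMeasure μ] [Fintype ι]
    {T : Set Ω} {B : ι → Set Ω} {ε : ℝ} (hε : 0 ≤ ε) (hB : ∀ i, μ (B i) ≤ ENNReal.ofReal ε)
    (hT : Tᶜ ⊆ ⋃ i, B i) :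
    ENNReal.ofReal (1 - Fintype.card ι * ε) ≤ μ T := by
  have hTc : μ Tᶜ ≤ ENNReal.ofReal (Fintype.card ι * ε) :=
    calc μ Tᶜ ≤ μ (⋃ i, B i) := measure_mono hT
      _ ≤ ∑ i, μ (B i) := measure_iUnion_fintype_le μ B
      _ ≤ ∑ _i : ι, ENNReal.ofReal ε := Finset.sum_le_sum fun i _ => hB i
      _ = ENNReal.ofReal (Fintype.card ι * ε) := by
        simp [ENNReal.ofReal_mul (Nat.cast_nonneg _)]
  rw [ENNReal.ofReal_sub _ (by positivity), ENNReal.ofReal_one, tsub_le_iff_right]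
  calc 1 = μ (T ∪ Tᶜ) := by rw [Set.union_compl_self, measure_univ]
    _ ≤ μ T + μ Tᶜ := measure_union_le _ _
    _ ≤ μ T + ENNReal.ofReal (Fintype.card ι * ε) := by gcongr

end Concentration

section Empirical

variable {α : Type*} [DecidableEq α] {n : ℕ}

noncomputable def empiricalDist (x : Fin n → α) (i : α) : ℝ :=
  (∑ j, if x j = i then (1 : ℝ) else 0) / n

theorem sum_mul_empiricalDist [Fintype α] (x : Fin n → α) (u : α → ℝ) :
    ∑ i, u i * empiricalDist x i = (∑ j, u (x j)) / n := by
  simp_rw [empiricalDist, mul_div_assoc', ← Finset.sum_div, Finset.mul_sum, mul_ite, mul_one,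
    mul_zero]
  rw [Finset.sum_comm]
  simp

theorem sum_mul_empiricalDist_sub [Fintype α] (hn : 0 < n) (x : Fin n → α) (u P : α → ℝ) :
    ∑ i, u i * (empiricalDist x i - P i) = (∑ j, (u (x j) - ∑ i, u i * P i)) / n := by
  simp_rw [mul_sub, Finset.sum_sub_distrib, sum_mul_empiricalDist, Finset.sum_const,
    Finset.card_univ, Fintype.card_fin, nsmul_eq_mul]
  field_simp

end Empirical

section SignVector

variable {ι : Type*} [DecidableEq ι]

def signVector (S : Finset ι) (i : ι) : ℝ := if i ∈ S then 1 else -1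

theorem signVector_mem_Icc (S : Finset ι) (i : ι) : signVector S i ∈ Set.Icc (-1) 1 := by
  unfold signVector
  split_ifs <;> norm_num

theorem sum_abs_eq_sum_signVector_mul [Fintype ι] (v : ι → ℝ) :
    ∑ i, |v i| = ∑ i, signVector {i | 0 ≤ v i} i * v i := by
  refine Finset.sum_congr rfl fun i _ => ?_
  by_cases hv : 0 ≤ v i
  · simp [signVector, hv, abs_of_nonneg hv]
  · simp [signVector, hv, abs_of_neg (not_le.mp hv)]

end SignVector

theorem measure_sum_mul_empiricalDist_sub_ge_le {Ω : Type*} [MeasurableSpace Ω] (μ : Measure Ω)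
    [IsProbabilityMeasure μ] {α : Type*} [DecidableEq α] [Fintype α] [MeasurableSpace α]
    [MeasurableSingletonClass α] {n : ℕ} (hn : 0 < n) {P : α → ℝ} (hP : ∀ i, 0 ≤ P i)
    {X : Fin n → Ω → α} (hmeas : ∀ j, Measurable (X j)) (hindep : iIndepFun X μ)
    (hdist : ∀ j i, μ (X j ⁻¹' {i}) = ENNReal.ofReal (P i))
    {u : α → ℝ} (hu : ∀ i, u i ∈ Set.Icc (-1) 1) {s : ℝ} (hs : 0 ≤ s) :
    μ {ω | 2 * s ≤ ∑ i, u i * (empiricalDist (X · ω) i - P i)} ≤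
      ENNReal.ofReal (exp (-2 * n * s ^ 2)) := by
  have hn' : (0 : ℝ) < n := Nat.cast_pos.mpr hn
  have hmean : ∀ j, ∫ ω, u (X j ω) ∂μ = ∑ i, u i * P i := fun j =>
    integral_comp_eq_sum_mul (hmeas j) hP (hdist j) u
  have hset : {ω | 2 * s ≤ ∑ i, u i * (empiricalDist (X · ω) i - P i)} =
      {ω | 2 * n * s ≤ ∑ j, (u (X j ω) - ∫ ω', u (X j ω') ∂μ)} := by
    ext ω
    simp only [Set.mem_ofPred_eq, sum_mul_empiricalDist_sub hn, hmean, le_div_iff₀ hn']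
    ring_nf
  rw [hset, ← ofReal_measureReal]
  refine ENNReal.ofReal_le_ofReal ((measureReal_sum_sub_integral_ge_le
    (fun j => (measurable_of_finite u).comp (hmeas j)) (hindep.comp (fun _ => u)
    fun _ => measurable_of_finite u) (fun j ω => hu (X j ω)) (by positivity)).trans_eq ?_)
  rw [Fintype.card_fin]
  congr 1
  field_simp
  ring

theorem stmt_3_general
    {Ω : Type*} [MeasurableSpace Ω] (μ : Measure Ω) [IsProbabilityMeasure μ]
    (N n : ℕ) (hn : 0 < n)
    (P : Fin N → ℝ) (hP : ∀ i, 0 ≤ P i)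
    (X : Fin n → Ω → Fin N) (hmeas : ∀ j, Measurable (X j))
    (hindep : iIndepFun X μ)
    (hdist : ∀ j i, μ (X j ⁻¹' {i}) = ENNReal.ofReal (P i))
    (δ : ℝ) (hδ : 0 < δ ∧ δ < 1) :
    ENNReal.ofReal (1 - δ) ≤
      μ {ω | ∑ i, |(∑ j, if X j ω = i then (1 : ℝ) else 0) / n - P i| ≤
        2 * Real.sqrt (1 / (2 * n) * Real.log (2 ^ (N + 1) / δ))} := by
  obtain ⟨hδ0, hδ1⟩ := hδ
  set s := √(1 / (2 * n) * log (2 ^ (N + 1) / δ))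
  have hlog : 0 ≤ log (2 ^ (N + 1) / δ) :=
    log_nonneg ((one_le_div hδ0).mpr (hδ1.le.trans (one_le_pow₀ one_le_two)))
  have htail : exp (-2 * n * s ^ 2) = δ / 2 ^ (N + 1) := by
    have hn' : (0 : ℝ) < n := Nat.cast_pos.mpr hn
    rw [sq_sqrt (by positivity), show -2 * (n : ℝ) * (1 / (2 * n) * log (2 ^ (N + 1) / δ)) =
      -log (2 ^ (N + 1) / δ) by field_simp, exp_neg, exp_log (by positivity), inv_div]
  have hcover : {ω | ∑ i, |empiricalDist (X · ω) i - P i| ≤ 2 * s}ᶜ ⊆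
      ⋃ S : Finset (Fin N),
        {ω | 2 * s ≤ ∑ i, signVector S i * (empiricalDist (X · ω) i - P i)} := by
    intro ω hω
    rw [Set.mem_compl_iff, Set.mem_ofPred_eq, not_le, sum_abs_eq_sum_signVector_mul] at hω
    exact Set.mem_iUnion.2 ⟨_, hω.le⟩
  refine le_trans ?_ (ofReal_one_sub_le_measure_of_compl_subset_iUnion (by positivity)
    (fun S => (measure_sum_mul_empiricalDist_sub_ge_le μ hn hP hmeas hindep hdist
      (signVector_mem_Icc S) (sqrt_nonneg _)).trans_eq (congrArg _ htail)) hcover)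
  rw [Fintype.card_finset, Fintype.card_fin, pow_succ]
  refine ENNReal.ofReal_le_ofReal ?_
  push_cast
  field_simp
  linarith

/-- L1 concentration for the empirical distribution of n i.i.d. samples from a
categorical distribution on N outcomes: with probability ≥ 1-δ,
‖P̂ - P‖₁ ≤ 2 √((1/(2n)) ln(2^{N+1}/δ)). -/
theorem stmt_3
    {Ω : Type*} [MeasurableSpace Ω] (μ : Measure Ω) [IsProbabilityMeasure μ]
    (N n : ℕ) (hn : 0 < n)
    (P : Fin N → ℝ) (hP : ∀ i, 0 ≤ P i) (hPsum : ∑ i, P i = 1)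
    (X : Fin n → Ω → Fin N) (hmeas : ∀ j, Measurable (X j))
    (hindep : iIndepFun X μ)
    (hdist : ∀ j i, μ (X j ⁻¹' {i}) = ENNReal.ofReal (P i))
    (δ : ℝ) (hδ : 0 < δ ∧ δ < 1) :
    ENNReal.ofReal (1 - δ) ≤
      μ {ω | ∑ i, |(∑ j, if X j ω = i then (1 : ℝ) else 0) / n - P i| ≤
        2 * Real.sqrt (1 / (2 * n) * Real.log (2 ^ (N + 1) / δ))} :=
  stmt_3_general μ N n hn P hP X hmeas hindep hdist δ hδ
end
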